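/- arXiv:1002.2576 — 3 statements merged into one kernel-verified Lean document; each statement's English description precedes it below -/
import Mathlib

section
/- Let X be a left dual and Y a right dual object in a monoidal category, with chosen dualities p = ⟨X, U, η, ε⟩ and q = ⟨V, Y, η', ε'⟩. A morphism f : X ⊗ Y → Y ⊗ X is an X-left isomorphism (i.e., l_p(f) is an isomorphism) if and only if it is a Y-right isomorphism (i.e., r_q(f) is an isomorphism). Explicitly, if l_p(f) is invertible then r_{pq}((l_p(f))⁻¹) is inverse to r_q(f), and if r_q(f) is invertible then l_{qp}((r_q(f))⁻¹) is inverse to l_p(f). -/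
/-!
With the dualities written as exact pairings `(U, X)` and `(Y, V)`, `r_q(f)` is precisely the
right adjoint mate of `l_p(f)` with respect to the product pairings `(Y ⊗ U, X ⊗ V)` and
`(U ⊗ Y, V ⊗ X)`: unfolding the mate produces two `U`–`X` zigzags, and cancelling them leaves
`r_q(f)`. Taking mates is functorial and bijective (`ᘁ(fᘁ) = f`), so it preserves and reflects
isomorphisms.
-/

open CategoryTheory MonoidalCategory

namespace Stmt3

variable {C : Type*} [Category C] [MonoidalCategory C]

/-- `l_p = a_p ∘ b_p⁻¹ : Hom(X ⊗ U, V ⊗ X) → Hom(U ⊗ Y, Y ⊗ V)` for a duality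
`p = ⟨X, Y, η, ε⟩` (so `η : 𝟙 ⟶ Y ⊗ X`, `ε : X ⊗ Y ⟶ 𝟙`). -/
def lp {X Y U V : C} (η : 𝟙_ C ⟶ Y ⊗ X) (ε : X ⊗ Y ⟶ 𝟙_ C)
    (f : X ⊗ U ⟶ V ⊗ X) : U ⊗ Y ⟶ Y ⊗ V :=
  (λ_ (U ⊗ Y)).inv ≫ η ▷ (U ⊗ Y) ≫ (α_ Y X (U ⊗ Y)).hom ≫
    Y ◁ ((α_ X U Y).inv ≫ f ▷ Y ≫ (α_ V X Y).hom ≫ V ◁ ε ≫ (ρ_ V).hom)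

/-- `r_p = b_p ∘ a_p⁻¹ : Hom(U ⊗ X, X ⊗ V) → Hom(Y ⊗ U, V ⊗ Y)` for a duality
`p = ⟨Y, X, η, ε⟩` (so `η : 𝟙 ⟶ X ⊗ Y`, `ε : Y ⊗ X ⟶ 𝟙`). -/
def rp {X Y U V : C} (η : 𝟙_ C ⟶ X ⊗ Y) (ε : Y ⊗ X ⟶ 𝟙_ C)
    (f : U ⊗ X ⟶ X ⊗ V) : Y ⊗ U ⟶ V ⊗ Y :=
  (ρ_ (Y ⊗ U)).inv ≫ (Y ⊗ U) ◁ η ≫ (α_ (Y ⊗ U) X Y).inv ≫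
    ((α_ Y U X).hom ≫ Y ◁ f ≫ (α_ Y X V).inv ≫ ε ▷ V ≫ (λ_ V).hom) ▷ Y

open ExactPairing

abbrev _root_.CategoryTheory.ExactPairing.ofZigzag {X Y : C}
    (η : 𝟙_ C ⟶ X ⊗ Y) (ε : Y ⊗ X ⟶ 𝟙_ C)
    (zig : (ρ_ Y).inv ≫ Y ◁ η ≫ (α_ Y X Y).inv ≫ ε ▷ Y ≫ (λ_ Y).hom = 𝟙 Y)
    (zag : (λ_ X).inv ≫ η ▷ X ≫ (α_ X Y X).hom ≫ X ◁ ε ≫ (ρ_ X).hom = 𝟙 X) :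
    ExactPairing X Y where
  coevaluation' := η
  evaluation' := ε
  coevaluation_evaluation' := by
    rw [← cancel_epi (ρ_ Y).inv, ← cancel_mono (λ_ Y).hom]; simpa using zig
  evaluation_coevaluation' := by
    rw [← cancel_epi (λ_ X).inv, ← cancel_mono (ρ_ X).hom]; simpa using zag

instance isIso_rightAdjointMate {A B : C} [HasRightDual A] [HasRightDual B] (f : A ⟶ B)
    [IsIso f] : IsIso (rightAdjointMate f) :=
  ⟨rightAdjointMate (inv f), by simp [← comp_rightAdjointMate],
    by simp [← comp_rightAdjointMate]⟩

instance isIso_leftAdjointMate {A B : C} [HasLeftDual A] [HasLeftDual B] (f : A ⟶ B)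
    [IsIso f] : IsIso (leftAdjointMate f) :=
  ⟨leftAdjointMate (inv f), by simp [← comp_leftAdjointMate],
    by simp [← comp_leftAdjointMate]⟩

theorem leftAdjointMate_rightAdjointMate {A B : C} [HasRightDual A] [HasRightDual B]
    (f : A ⟶ B) : leftAdjointMate (rightAdjointMate f) = f :=
  calc leftAdjointMate (rightAdjointMate f)
    _ = (λ_ A).inv ≫ (η_ B Bᘁ ≫ B ◁ rightAdjointMate f) ▷ A ≫ (α_ _ _ _).hom ≫
        B ◁ ε_ A Aᘁ ≫ (ρ_ B).hom := by simp [leftAdjointMate]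
    _ = 𝟙 A ⊗≫ η_ A Aᘁ ▷ A ⊗≫ (f ▷ (Aᘁ ⊗ A) ≫ B ◁ ε_ A Aᘁ) ⊗≫ 𝟙 B := by
        rw [coevaluation_comp_rightAdjointMate]; monoidal
    _ = (𝟙 A ⊗≫ (η_ A Aᘁ ▷ A ⊗≫ A ◁ ε_ A Aᘁ) ⊗≫ 𝟙 A) ≫ f := by
        rw [← whisker_exchange]; monoidal
    _ = f := by rw [evaluation_coevaluation'']; monoidal

theorem isIso_rightAdjointMate_iff {A B : C} [HasRightDual A] [HasRightDual B] (f : A ⟶ B) :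
    IsIso (rightAdjointMate f) ↔ IsIso f :=
  ⟨fun _ ↦ leftAdjointMate_rightAdjointMate f ▸ inferInstance, fun _ ↦ inferInstance⟩

section

variable {X U Y V : C} [ExactPairing U X] [ExactPairing Y V]

theorem rightAdjointMate_lp (f : X ⊗ Y ⟶ Y ⊗ X) :
    @rightAdjointMate C _ _ (Y ⊗ U) (U ⊗ Y) ⟨X ⊗ V⟩ ⟨V ⊗ X⟩ (lp (η_ U X) (ε_ U X) f) =
      rp (η_ Y V) (ε_ Y V) f :=
  calc _
    _ = 𝟙 _ ⊗≫ (V ⊗ X) ◁ η_ Y V ⊗≫ V ◁ X ◁ Y ◁ η_ U X ▷ V ⊗≫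
          V ◁ X ◁ η_ U X ▷ ((Y ⊗ U) ⊗ (X ⊗ V)) ⊗≫
          V ◁ ((X ⊗ U) ◁ (f ▷ U ⊗≫ Y ◁ ε_ U X ⊗≫ 𝟙 Y) ≫ ε_ U X ▷ Y) ▷ (X ⊗ V) ⊗≫
          ε_ Y V ▷ (X ⊗ V) ⊗≫ 𝟙 _ := by
        simp only [rightAdjointMate, lp, tensor_coevaluation, tensor_evaluation]
        monoidal
    _ = 𝟙 _ ⊗≫ (V ⊗ X) ◁ η_ Y V ⊗≫ V ◁ X ◁ Y ◁ η_ U X ▷ V ⊗≫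
          V ◁ (X ◁ η_ U X ⊗≫ ε_ U X ▷ X) ▷ ((Y ⊗ U) ⊗ (X ⊗ V)) ⊗≫
          V ◁ (f ▷ U ⊗≫ Y ◁ ε_ U X ⊗≫ 𝟙 Y) ▷ (X ⊗ V) ⊗≫
          ε_ Y V ▷ (X ⊗ V) ⊗≫ 𝟙 _ := by
        rw [whisker_exchange]; monoidal
    _ = 𝟙 _ ⊗≫ (V ⊗ X) ◁ η_ Y V ⊗≫ V ◁ ((X ⊗ Y) ◁ η_ U X ≫ f ▷ (U ⊗ X)) ▷ V ⊗≫
          V ◁ Y ◁ ε_ U X ▷ (X ⊗ V) ⊗≫ ε_ Y V ▷ (X ⊗ V) ⊗≫ 𝟙 _ := by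
        rw [coevaluation_evaluation'']; monoidal
    _ = 𝟙 _ ⊗≫ (V ⊗ X) ◁ η_ Y V ⊗≫ V ◁ f ▷ V ⊗≫
          V ◁ Y ◁ (X ◁ η_ U X ⊗≫ ε_ U X ▷ X) ▷ V ⊗≫ ε_ Y V ▷ (X ⊗ V) ⊗≫ 𝟙 _ := by
        rw [whisker_exchange]; monoidal
    _ = rp (η_ Y V) (ε_ Y V) f := by
        rw [coevaluation_evaluation'']; simp only [rp]; monoidal

theorem isIso_lp_iff_isIso_rp (f : X ⊗ Y ⟶ Y ⊗ X) :
    IsIso (lp (η_ U X) (ε_ U X) f) ↔ IsIso (rp (η_ Y V) (ε_ Y V) f) := by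
  let _ : HasRightDual (Y ⊗ U) := ⟨X ⊗ V⟩
  let _ : HasRightDual (U ⊗ Y) := ⟨V ⊗ X⟩
  rw [← rightAdjointMate_lp (U := U) (V := V), isIso_rightAdjointMate_iff]

end

/-- if `X` is a left dual (via `p = ⟨X, U, η, ε⟩`) and `Y` is a right dual
(via `q = ⟨V, Y, η', ε'⟩`), then a morphism `f : X ⊗ Y ⟶ Y ⊗ X` is an `X`-left
isomorphism (`l_p(f)` is an isomorphism) iff it is a `Y`-right isomorphism
(`r_q(f)` is an isomorphism). -/
theorem statement3 {X U Y V : C}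
    (η : 𝟙_ C ⟶ U ⊗ X) (ε : X ⊗ U ⟶ 𝟙_ C)
    (η' : 𝟙_ C ⟶ Y ⊗ V) (ε' : V ⊗ Y ⟶ 𝟙_ C)
    (zig : (ρ_ X).inv ≫ X ◁ η ≫ (α_ X U X).inv ≫ ε ▷ X ≫ (λ_ X).hom = 𝟙 X)
    (zag : (λ_ U).inv ≫ η ▷ U ≫ (α_ U X U).hom ≫ U ◁ ε ≫ (ρ_ U).hom = 𝟙 U)
    (zig' : (ρ_ V).inv ≫ V ◁ η' ≫ (α_ V Y V).inv ≫ ε' ▷ V ≫ (λ_ V).hom = 𝟙 V)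
    (zag' : (λ_ Y).inv ≫ η' ▷ Y ≫ (α_ Y V Y).hom ≫ Y ◁ ε' ≫ (ρ_ Y).hom = 𝟙 Y)
    (f : X ⊗ Y ⟶ Y ⊗ X) :
    IsIso (lp η ε f) ↔ IsIso (rp η' ε' f) :=
  let _ : ExactPairing U X := .ofZigzag η ε zig zag
  let _ : ExactPairing Y V := .ofZigzag η' ε' zig' zag'
  isIso_lp_iff_isIso_rp (U := U) (V := V) f

end Stmt3
end

section
/- Let H be a bialgebra (over a commutative ring, or a Hopf object in a symmetric monoidal category), σ the swap map on H ⊗ H, and τ = σ ∘ (id ⊗ ∇) ∘ (Δ ⊗ id) : H ⊗ H → H ⊗ H, i.e., τ(x ⊗ y) = Σ x₍₂₎ y ⊗ x₍₁₎ in Sweedler notation. Then τ satisfies the pentagon-type equation (τ ⊗ id) ∘ (id ⊗ σ) ∘ (τ ⊗ id) = (id ⊗ τ) ∘ (τ ⊗ id) ∘ (id ⊗ τ). -/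
/-!
Write `Δᶜᵒᵖ = σ ∘ Δ`; it is an algebra map since `Δ` and `σ` are, and `τ (x ⊗ y) = Δᶜᵒᵖ x * (y ⊗ 1)`.
Pushing this through both sides, each of them sends `x ⊗ y ⊗ z` to `X * (τ (y ⊗ z) ⊗ 1)` in the
algebra `H ⊗ H ⊗ H`, with `X = (Δᶜᵒᵖ ⊗ id) (Δᶜᵒᵖ x)` on the left and `X = (id ⊗ Δᶜᵒᵖ) (Δᶜᵒᵖ x)` on
the right. These agree because `Δᶜᵒᵖ` is coassociative, as `Δ` is.
-/

open TensorProduct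

namespace Stmt6

variable {R H : Type*} [CommRing R] [Ring H] [Bialgebra R H]

/-- The tensor flip `σ : H ⊗ H → H ⊗ H`. -/
noncomputable def σ : H ⊗[R] H →ₗ[R] H ⊗[R] H := (TensorProduct.comm R H H).toLinearMap

/-- `τ = σ ∘ (id ⊗ ∇) ∘ (Δ ⊗ id)`, i.e. `τ(x ⊗ y) = Σ x₍₂₎ y ⊗ x₍₁₎`. -/
noncomputable def τ : H ⊗[R] H →ₗ[R] H ⊗[R] H :=
  σ (R := R) ∘ₗ LinearMap.lTensor H (LinearMap.mul' R H) ∘ₗ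
    (TensorProduct.assoc R H H H).toLinearMap ∘ₗ
      LinearMap.rTensor H (Coalgebra.comul (R := R) (A := H))

/-- `f ⊗ id` on `(H ⊗ H) ⊗ H`. -/
noncomputable def L1 (f : H ⊗[R] H →ₗ[R] H ⊗[R] H) :
    (H ⊗[R] H) ⊗[R] H →ₗ[R] (H ⊗[R] H) ⊗[R] H := LinearMap.rTensor H f

/-- `id ⊗ f` on `(H ⊗ H) ⊗ H`. -/
noncomputable def L2 (f : H ⊗[R] H →ₗ[R] H ⊗[R] H) :
    (H ⊗[R] H) ⊗[R] H →ₗ[R] (H ⊗[R] H) ⊗[R] H :=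
  (TensorProduct.assoc R H H H).symm.toLinearMap ∘ₗ LinearMap.lTensor H f ∘ₗ
    (TensorProduct.assoc R H H H).toLinearMap

theorem L1_tmul (f : H ⊗[R] H →ₗ[R] H ⊗[R] H) (u : H ⊗[R] H) (c : H) :
    L1 f (u ⊗ₜ c) = f u ⊗ₜ c :=
  rfl

theorem L2_tmul (f : H ⊗[R] H →ₗ[R] H ⊗[R] H) (a b c : H) :
    L2 f ((a ⊗ₜ b) ⊗ₜ c) = (TensorProduct.assoc R H H H).symm (a ⊗ₜ f (b ⊗ₜ c)) :=
  rfl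

theorem lTensor_mul'_assoc_tmul {A : Type*} [Semiring A] [Algebra R A] (w : A ⊗[R] A) (y : A) :
    LinearMap.lTensor A (LinearMap.mul' R A) (TensorProduct.assoc R A A A (w ⊗ₜ y)) =
      w * (1 ⊗ₜ y) := by
  induction w using TensorProduct.induction_on with
  | zero => simp
  | tmul a b => simp
  | add u v hu hv => simp [add_tmul, add_mul, hu, hv]

theorem σ_mul (u v : H ⊗[R] H) : σ (u * v) = σ u * σ v :=
  map_mul (Algebra.TensorProduct.comm R H H) u v

noncomputable def comulCop : H →ₐ[R] H ⊗[R] H :=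
  (Algebra.TensorProduct.comm R H H).toAlgHom.comp (Bialgebra.comulAlgHom R H)

theorem comulCop_apply (x : H) : comulCop x = σ (R := R) (Coalgebra.comul x) :=
  rfl

theorem comulCop_coassoc (x : H) :
    Algebra.TensorProduct.map comulCop (AlgHom.id R H) (comulCop x) =
      (Algebra.TensorProduct.assoc R R R H H H).symm
        (Algebra.TensorProduct.map (AlgHom.id R H) comulCop (comulCop x)) := by
  have reverse_assoc : ∀ u : (H ⊗[R] H) ⊗[R] H,
      LinearMap.rTensor H σ (TensorProduct.comm R H (H ⊗[R] H) (TensorProduct.assoc R H H H u)) =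
        (TensorProduct.assoc R H H H).symm
          (LinearMap.lTensor H σ (TensorProduct.comm R (H ⊗[R] H) H u)) := by
    intro u
    induction u using TensorProduct.induction_on with
    | zero => simp
    | tmul p c =>
      induction p using TensorProduct.induction_on with
      | zero => simp
      | tmul a b => rfl
      | add u v hu hv => simp_all [add_tmul]
    | add u v hu hv => simp_all
  rw [comulCop_apply]
  calc Algebra.TensorProduct.map comulCop (AlgHom.id R H) (σ (Coalgebra.comul x))
      = LinearMap.rTensor H σ (TensorProduct.comm R H (H ⊗[R] H)
          (LinearMap.lTensor H Coalgebra.comul (Coalgebra.comul x))) := by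
        induction Coalgebra.comul (R := R) x using TensorProduct.induction_on with
        | zero => simp
        | tmul a b => rfl
        | add u v hu hv => simp_all
    _ = LinearMap.rTensor H σ (TensorProduct.comm R H (H ⊗[R] H) (TensorProduct.assoc R H H H
          (LinearMap.rTensor H Coalgebra.comul (Coalgebra.comul x)))) := by
        rw [Coalgebra.coassoc_apply]
    _ = (TensorProduct.assoc R H H H).symm (LinearMap.lTensor H σ
          (TensorProduct.comm R (H ⊗[R] H) H
            (LinearMap.rTensor H Coalgebra.comul (Coalgebra.comul x)))) :=
        reverse_assoc _
    _ = _ := by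
        induction Coalgebra.comul (R := R) x using TensorProduct.induction_on with
        | zero => simp
        | tmul a b => rfl
        | add u v hu hv => simp_all

theorem τ_tmul (x y : H) : τ (R := R) (x ⊗ₜ y) = comulCop x * (y ⊗ₜ 1) := by
  simp only [τ, LinearMap.comp_apply, LinearMap.rTensor_tmul, LinearEquiv.coe_coe,
    lTensor_mul'_assoc_tmul, σ_mul, comulCop_apply]
  rfl

theorem L1_τ_L2_σ_tmul (w : H ⊗[R] H) (z : H) :
    L1 τ (L2 σ (w ⊗ₜ z)) =
      Algebra.TensorProduct.map comulCop (AlgHom.id R H) w * ((z ⊗ₜ 1) ⊗ₜ 1) := by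
  induction w using TensorProduct.induction_on with
  | zero => simp
  | tmul a b => simp [L2_tmul, σ, L1_tmul, τ_tmul]
  | add u v hu hv => simp [add_tmul, add_mul, hu, hv]

theorem L2_τ_tmul (w : H ⊗[R] H) (c : H) :
    L2 τ (w ⊗ₜ c) = (Algebra.TensorProduct.assoc R R R H H H).symm
      (Algebra.TensorProduct.map (AlgHom.id R H) comulCop w) * ((1 ⊗ₜ c) ⊗ₜ 1) := by
  induction w using TensorProduct.induction_on with
  | zero => simp
  | tmul a b =>
    have hc : ((1 : H) ⊗ₜ[R] c) ⊗ₜ[R] (1 : H) =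
        (Algebra.TensorProduct.assoc R R R H H H).symm (1 ⊗ₜ (c ⊗ₜ 1)) :=
      rfl
    rw [hc, ← map_mul, L2_tmul, τ_tmul, Algebra.TensorProduct.map_tmul,
      Algebra.TensorProduct.tmul_mul_tmul, AlgHom.id_apply, mul_one]
    rfl
  | add u v hu hv => simp [add_tmul, add_mul, hu, hv]

theorem L1_τ_comp_L2_σ_comp_L1_τ_tmul (x y z : H) :
    (L1 τ ∘ₗ L2 σ ∘ₗ L1 τ) ((x ⊗ₜ y) ⊗ₜ z) =
      Algebra.TensorProduct.map comulCop (AlgHom.id R H) (comulCop x) *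
        (τ (R := R) (y ⊗ₜ z) ⊗ₜ 1) := by
  rw [LinearMap.comp_apply, LinearMap.comp_apply, L1_tmul, τ_tmul, L1_τ_L2_σ_tmul, map_mul,
    τ_tmul, mul_assoc]
  simp

theorem L2_τ_L1_τ_tmul (x a b : H) :
    L2 τ (L1 τ ((x ⊗ₜ a) ⊗ₜ b)) = (Algebra.TensorProduct.assoc R R R H H H).symm
      (Algebra.TensorProduct.map (AlgHom.id R H) comulCop (comulCop x)) * ((a ⊗ₜ b) ⊗ₜ 1) := by
  rw [L1_tmul, τ_tmul, L2_τ_tmul, map_mul, map_mul, mul_assoc]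
  simp [Algebra.TensorProduct.one_def]

theorem L2_τ_comp_L1_τ_comp_L2_τ_tmul (x y z : H) :
    (L2 τ ∘ₗ L1 τ ∘ₗ L2 τ) ((x ⊗ₜ y) ⊗ₜ z) = (Algebra.TensorProduct.assoc R R R H H H).symm
      (Algebra.TensorProduct.map (AlgHom.id R H) comulCop (comulCop x)) *
        (τ (R := R) (y ⊗ₜ z) ⊗ₜ 1) := by
  rw [LinearMap.comp_apply, LinearMap.comp_apply, L2_tmul]
  induction τ (R := R) (y ⊗ₜ z) using TensorProduct.induction_on with
  | zero => simp
  | tmul a b => exact L2_τ_L1_τ_tmul x a b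
  | add u v hu hv => simp_all [tmul_add, add_tmul, mul_add]

/-- for a bialgebra `H`, the map `τ(x ⊗ y) = Σ x₍₂₎ y ⊗ x₍₁₎` satisfies the
pentagon-type equation `(τ ⊗ id)(id ⊗ σ)(τ ⊗ id) = (id ⊗ τ)(τ ⊗ id)(id ⊗ τ)`. -/
theorem statement6 :
    L1 (τ (R := R) (H := H)) ∘ₗ L2 (σ (R := R)) ∘ₗ L1 (τ (R := R)) =
      L2 (τ (R := R)) ∘ₗ L1 (τ (R := R)) ∘ₗ L2 (τ (R := R)) :=
  TensorProduct.ext_threefold fun x y z => by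
    rw [L1_τ_comp_L2_σ_comp_L1_τ_tmul, L2_τ_comp_L1_τ_comp_L2_τ_tmul, comulCop_coassoc]

end Stmt6
end

section
/- Let H be a finite-dimensional Hopf algebra over a field K with invertible antipode, X its underlying vector space, σ the tensor flip on X ⊗ X, and τ = σ ∘ (id ⊗ ∇) ∘ (Δ ⊗ id). Then (Vect_K, X, σ, τ) is a rigid T-matrix: σ and τ satisfy equations (τ ⊗ 1)(1 ⊗ σ)(σ ⊗ 1) = (1 ⊗ σ)(σ ⊗ 1)(1 ⊗ τ) and (τ ⊗ 1)(1 ⊗ σ)(τ ⊗ 1) = (1 ⊗ τ)(τ ⊗ 1)(1 ⊗ τ), and the partial transposes r_p(τ^{±1}) of τ and its inverse (with respect to the canonical duality p between X* and X) are invertible linear maps. -/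
/-!
`τ (a ⊗ b) = ∑ a₍₂₎ b ⊗ a₍₁₎` is the flipped fusion operator `h ⊗ m ↦ ∑ h₍₂₎ • m ⊗ h₍₁₎` of the
regular action. For any `act : H ⊗ M → M`, `m ⊗ h ↦ ∑ h₍₁₎ ⊗ s h₍₂₎ • m` is a left inverse of the
fusion operator as soon as `∑ s h₍₁₎ • h₍₂₎ • m = ε h • m`; this holds for `s = S` on `H`, and for
`s = S⁻¹` on `H*` acted on by `(h • g) x = g (h x)`.

Through `V ⊗ X* ≅ Hom(X, V)` the partial transpose `r_p f` becomes
`g ⊗ u ↦ (x ↦ (g ⊗ id) (f (u ⊗ x)))`. For `f = τ` this is, up to flips, the fusion operator of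
`H*`; for `f = τ⁻¹` it is `H* ⊗ H ≅ End H` followed by `ψ ↦ (x ↦ ∑ S x₍₂₎ * ψ x₍₁₎)`, whose inverse is the
same operator with `S²` in place of `S`. Finite dimensionality turns the one-sided inverses into
bijections. The first braid relation is naturality of the flip; the second is coassociativity
together with multiplicativity of `Δ`.
-/

open TensorProduct

namespace Stmt10

variable {K H : Type*} [Field K] [Ring H] [HopfAlgebra K H] [FiniteDimensional K H]

/-- The partial transpose `r_p` (in the first tensor factor) of a linear map
`f : U ⊗ X → X ⊗ V`, with respect to the canonical duality
`p = ⟨X*, X, coev, eval⟩`; it is the composition `b_p ∘ a_p⁻¹`. -/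
noncomputable def rp {X U V : Type*} [AddCommGroup X] [Module K X]
    [FiniteDimensional K X] [AddCommGroup U] [Module K U] [AddCommGroup V] [Module K V]
    (f : U ⊗[K] X →ₗ[K] X ⊗[K] V) :
    Module.Dual K X ⊗[K] U →ₗ[K] V ⊗[K] Module.Dual K X :=
  LinearMap.rTensor (Module.Dual K X)
      ((TensorProduct.lid K V).toLinearMap ∘ₗ
        LinearMap.rTensor V (contractLeft K X) ∘ₗ
          (TensorProduct.assoc K (Module.Dual K X) X V).symm.toLinearMap ∘ₗ
            LinearMap.lTensor (Module.Dual K X) f ∘ₗ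
              (TensorProduct.assoc K (Module.Dual K X) U X).toLinearMap) ∘ₗ
    (TensorProduct.assoc K (Module.Dual K X ⊗[K] U) X (Module.Dual K X)).symm.toLinearMap ∘ₗ
      LinearMap.lTensor (Module.Dual K X ⊗[K] U) (coevaluation K X) ∘ₗ
        (TensorProduct.rid K (Module.Dual K X ⊗[K] U)).symm.toLinearMap

/-- The tensor flip `σ`. -/
noncomputable def σ : H ⊗[K] H →ₗ[K] H ⊗[K] H := (TensorProduct.comm K H H).toLinearMap

/-- `τ = σ ∘ (id ⊗ ∇) ∘ (Δ ⊗ id)`. -/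
noncomputable def τ : H ⊗[K] H →ₗ[K] H ⊗[K] H :=
  σ (K := K) ∘ₗ LinearMap.lTensor H (LinearMap.mul' K H) ∘ₗ
    (TensorProduct.assoc K H H H).toLinearMap ∘ₗ
      LinearMap.rTensor H (Coalgebra.comul (R := K) (A := H))

/-- `f ⊗ id` on `(H ⊗ H) ⊗ H`. -/
noncomputable def L1 (f : H ⊗[K] H →ₗ[K] H ⊗[K] H) :
    (H ⊗[K] H) ⊗[K] H →ₗ[K] (H ⊗[K] H) ⊗[K] H := LinearMap.rTensor H f

/-- `id ⊗ f` on `(H ⊗ H) ⊗ H`. -/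
noncomputable def L2 (f : H ⊗[K] H →ₗ[K] H ⊗[K] H) :
    (H ⊗[K] H) ⊗[K] H →ₗ[K] (H ⊗[K] H) ⊗[K] H :=
  (TensorProduct.assoc K H H H).symm.toLinearMap ∘ₗ LinearMap.lTensor H f ∘ₗ
    (TensorProduct.assoc K H H H).toLinearMap

end Stmt10

open Coalgebra HopfAlgebra

namespace Stmt10

section PartialTranspose

variable {K X U V : Type*} [Field K] [AddCommGroup X] [Module K X] [AddCommGroup U] [Module K U]
  [AddCommGroup V] [Module K V]

lemma lid_rTensor_contractLeft_assoc_symm (g : Module.Dual K X) (w : X ⊗[K] V) :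
    TensorProduct.lid K V (LinearMap.rTensor V (contractLeft K X)
        ((TensorProduct.assoc K (Module.Dual K X) X V).symm (g ⊗ₜ w))) =
      TensorProduct.lid K V (LinearMap.rTensor V g w) := by
  induction w using TensorProduct.induction_on with
  | zero => simp
  | tmul x v => simp
  | add w₁ w₂ h₁ h₂ => simp only [tmul_add, map_add, h₁, h₂]

lemma dualTensorHom_comm_rp_tmul [FiniteDimensional K X] (f : U ⊗[K] X →ₗ[K] X ⊗[K] V)
    (g : Module.Dual K X) (u : U) (x : X) :
    dualTensorHom K X V (TensorProduct.comm K V (Module.Dual K X) (rp f (g ⊗ₜ u))) x =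
      TensorProduct.lid K V (LinearMap.rTensor V g (f (u ⊗ₜ x))) := by
  set b := Module.Basis.ofVectorSpace K X
  set φ : X →ₗ[K] V := (TensorProduct.lid K V).toLinearMap ∘ₗ LinearMap.rTensor V g ∘ₗ f ∘ₗ
    TensorProduct.mk K U X u
  suffices ∑ i, b.coord i x • φ (b i) = φ x by
    simpa [rp, coevaluation_apply_one, tmul_sum, lid_rTensor_contractLeft_assoc_symm, φ, b]
      using this
  simp only [Module.Basis.coord_apply, ← map_smul, ← map_sum, b.sum_repr]

lemma rp_bijective_iff [FiniteDimensional K X] (f : U ⊗[K] X →ₗ[K] X ⊗[K] V) :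
    Function.Bijective (rp f) ↔ Function.Bijective
      (dualTensorHom K X V ∘ₗ (TensorProduct.comm K V (Module.Dual K X)).toLinearMap ∘ₗ rp f) := by
  have hW := (dualTensorHom_bijective (R := K) (M := X) (N := V)).comp
    (TensorProduct.comm K V (Module.Dual K X)).bijective
  simp only [LinearMap.coe_comp, LinearEquiv.coe_coe, ← Function.comp_assoc]
  exact (Function.Bijective.of_comp_iff' hW _).symm

end PartialTranspose

section Fusion

variable {R H M : Type*} [CommSemiring R] [Semiring H] [HopfAlgebra R H] [AddCommMonoid M]
  [Module R M]

/-- `h ⊗ m ↦ ∑ act (h₍₂₎ ⊗ m) ⊗ h₍₁₎`: the fusion operator of `act`, followed by the flip. -/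
noncomputable def fusion (act : H ⊗[R] M →ₗ[R] M) : H ⊗[R] M →ₗ[R] M ⊗[R] H :=
  (TensorProduct.comm R H M).toLinearMap ∘ₗ LinearMap.lTensor H act ∘ₗ
    (TensorProduct.assoc R H H M).toLinearMap ∘ₗ LinearMap.rTensor M comul

/-- `m ⊗ h ↦ ∑ h₍₁₎ ⊗ act (s h₍₂₎ ⊗ m)`. -/
noncomputable def fusionInv (s : H →ₗ[R] H) (act : H ⊗[R] M →ₗ[R] M) :
    M ⊗[R] H →ₗ[R] H ⊗[R] M :=
  LinearMap.lTensor H (act ∘ₗ LinearMap.rTensor M s) ∘ₗ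
    (TensorProduct.assoc R H H M).toLinearMap ∘ₗ
      LinearMap.rTensor M comul ∘ₗ (TensorProduct.comm R M H).toLinearMap

lemma fusion_tmul (act : H ⊗[R] M →ₗ[R] M) {h : H} {ι : Type*} (r : Repr R h ι) (m : M) :
    fusion act (h ⊗ₜ m) = ∑ i ∈ r.index, act (r.right i ⊗ₜ m) ⊗ₜ r.left i := by
  simp [fusion, ← r.eq, sum_tmul]

lemma fusionInv_tmul (s : H →ₗ[R] H) (act : H ⊗[R] M →ₗ[R] M) (m : M) {h : H} {ι : Type*}
    (r : Repr R h ι) :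
    fusionInv s act (m ⊗ₜ h) = ∑ i ∈ r.index, r.left i ⊗ₜ act (s (r.right i) ⊗ₜ m) := by
  simp [fusionInv, ← r.eq, sum_tmul]

lemma fusionInv_comp_fusion (s : H →ₗ[R] H) (act : H ⊗[R] M →ₗ[R] M)
    (hs : ∀ h m, act (map s act (TensorProduct.assoc R H H M (comul h ⊗ₜ m))) =
      counit (R := R) h • m) :
    fusionInv s act ∘ₗ fusion act = LinearMap.id := by
  refine TensorProduct.ext' fun h m => ?_
  let c : H ⊗[R] H →ₗ[R] M := act ∘ₗ map s act ∘ₗ (TensorProduct.assoc R H H M).toLinearMap ∘ₗ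
    (TensorProduct.mk R (H ⊗[R] H) M).flip m
  have hc : c ∘ₗ comul = LinearMap.toSpanSingleton R M m ∘ₗ counit := by
    ext h
    exact hs h m
  calc fusionInv s act (fusion act (h ⊗ₜ m))
      = LinearMap.lTensor H c
          (TensorProduct.assoc R H H H (LinearMap.rTensor H comul (comul h))) := by
        rw [fusion_tmul act (ℛ R h), ← (ℛ R h).eq]
        simp only [map_sum, LinearMap.rTensor_tmul]
        refine Finset.sum_congr rfl fun i _ => ?_
        rw [fusionInv_tmul _ _ _ (ℛ R _), ← (ℛ R _).eq]
        simp [c, sum_tmul]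
    _ = LinearMap.lTensor H (c ∘ₗ comul) (comul h) := by
        rw [coassoc_apply, ← LinearMap.lTensor_comp_apply]
    _ = h ⊗ₜ m := by
        rw [hc, LinearMap.lTensor_comp_apply, lTensor_counit_comul]
        simp

end Fusion

section Twist

variable {R H : Type*} [CommSemiring R] [Semiring H] [HopfAlgebra R H]

/-- `ψ ↦ (x ↦ ∑ s x₍₂₎ * ψ x₍₁₎)`. -/
noncomputable def twist (s : H →ₗ[R] H) : (H →ₗ[R] H) →ₗ[R] H →ₗ[R] H where
  toFun ψ := LinearMap.mul' R H ∘ₗ map s ψ ∘ₗ (TensorProduct.comm R H H).toLinearMap ∘ₗ comul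
  map_add' ψ ψ' := by simp only [map_add_right, LinearMap.add_comp, LinearMap.comp_add]
  map_smul' c ψ := by
    simp only [map_smul_right, LinearMap.smul_comp, LinearMap.comp_smul, RingHom.id_apply]

lemma twist_apply (s ψ : H →ₗ[R] H) (x : H) :
    twist s ψ x = LinearMap.mul' R H (map s ψ (TensorProduct.comm R H H (comul x))) := rfl

lemma twist_comp_twist (s s' : H →ₗ[R] H)
    (hs : ∀ y, LinearMap.mul' R H (map s' s (TensorProduct.comm R H H (comul y))) =
      counit (R := R) y • 1) :
    twist s' ∘ₗ twist s = LinearMap.id := by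
  ext ψ x
  let g : H ⊗[R] H →ₗ[R] H :=
    LinearMap.mul' R H ∘ₗ map s' s ∘ₗ (TensorProduct.comm R H H).toLinearMap
  let c : H ⊗[R] (H ⊗[R] H) →ₗ[R] H :=
    LinearMap.mul' R H ∘ₗ (TensorProduct.comm R H H).toLinearMap ∘ₗ map ψ g
  have hg : g ∘ₗ comul = Algebra.linearMap R H ∘ₗ counit := by
    ext y
    simpa [g, Algebra.smul_def] using hs y
  calc twist s' (twist s ψ) x
      = c (TensorProduct.assoc R H H H (LinearMap.rTensor H comul (comul x))) := by
        rw [twist_apply, ← (ℛ R x).eq]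
        simp only [map_sum, comm_tmul, map_tmul, LinearMap.rTensor_tmul]
        refine Finset.sum_congr rfl fun i _ => ?_
        rw [twist_apply, ← (ℛ R ((ℛ R x).left i)).eq]
        simp [c, g, sum_tmul, Finset.mul_sum, mul_assoc]
    _ = LinearMap.mul' R H (TensorProduct.comm R H H (map ψ (g ∘ₗ comul) (comul x))) := by
        rw [coassoc_apply]
        simp only [c, LinearMap.comp_apply, LinearMap.map_lTensor, LinearEquiv.coe_coe]
    _ = ψ x := by
        rw [hg, ← LinearMap.map_lTensor, lTensor_counit_comul]
        simp

end Twist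

section Tau

variable {K H : Type*} [Field K] [Ring H] [HopfAlgebra K H]

lemma τ_eq_fusion : τ (K := K) (H := H) = fusion (LinearMap.mul' K H) := rfl

lemma τ_tmul (x c : H) :
    τ (K := K) (x ⊗ₜ c) = TensorProduct.comm K H H (comul x * (1 ⊗ₜ c)) := by
  rw [τ_eq_fusion, fusion_tmul _ (ℛ K x), ← (ℛ K x).eq]
  simp [Finset.sum_mul, Algebra.TensorProduct.tmul_mul_tmul]

noncomputable def τinv : H ⊗[K] H →ₗ[K] H ⊗[K] H := fusionInv (antipode K) (LinearMap.mul' K H)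

lemma τinv_comp_τ : τinv (K := K) (H := H) ∘ₗ τ = LinearMap.id := by
  refine fusionInv_comp_fusion _ _ fun h m => ?_
  rw [← (ℛ K h).eq]
  simp [sum_tmul, ← mul_assoc, ← Finset.sum_mul, sum_antipode_mul_eq_smul]

lemma τ_comp_τinv [FiniteDimensional K H] : τ (K := K) (H := H) ∘ₗ τinv = LinearMap.id :=
  (LinearMap.comp_eq_id_comm K (H ⊗[K] H)).mp τinv_comp_τ

lemma L2_σ_L1_σ_assoc_symm_tmul (a : H) (w : H ⊗[K] H) :
    L2 σ (L1 σ ((TensorProduct.assoc K H H H).symm (a ⊗ₜ w))) = w ⊗ₜ a := by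
  induction w using TensorProduct.induction_on with
  | zero => simp
  | tmul b c => rfl
  | add w₁ w₂ h₁ h₂ => simp only [tmul_add, map_add, h₁, h₂, add_tmul]

lemma L1_comp_L2_σ_comp_L1_σ (f : H ⊗[K] H →ₗ[K] H ⊗[K] H) :
    L1 f ∘ₗ L2 σ ∘ₗ L1 σ = L2 σ ∘ₗ L1 σ ∘ₗ L2 f := by
  refine TensorProduct.ext_threefold fun a b c => ?_
  calc L1 f (L2 σ (L1 σ ((a ⊗ₜ b) ⊗ₜ c))) = f (b ⊗ₜ c) ⊗ₜ a := rfl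
    _ = L2 σ (L1 σ ((TensorProduct.assoc K H H H).symm (a ⊗ₜ f (b ⊗ₜ c)))) :=
      (L2_σ_L1_σ_assoc_symm_tmul a _).symm

lemma L1_τ_comp_L2_σ_comp_L1_τ :
    L1 τ ∘ₗ L2 σ ∘ₗ L1 (τ (K := K) (H := H)) = L2 τ ∘ₗ L1 τ ∘ₗ L2 τ := by
  refine TensorProduct.ext_threefold fun a b c => ?_
  let Ψ : H ⊗[K] H →ₗ[K] H ⊗[K] H :=
    (TensorProduct.comm K H H).toLinearMap ∘ₗ LinearMap.mulRight K (comul b * (1 ⊗ₜ c))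
  let G : H ⊗[K] (H ⊗[K] H) →ₗ[K] (H ⊗[K] H) ⊗[K] H :=
    LinearMap.rTensor H Ψ ∘ₗ (TensorProduct.comm K H (H ⊗[K] H)).toLinearMap
  -- `G (p ⊗ q ⊗ t) = ∑ (t b₍₂₎ c ⊗ q b₍₁₎) ⊗ p`; the two sides are `G` applied to the two sides
  -- of coassociativity.
  have lhs :
      (L1 τ ∘ₗ L2 σ ∘ₗ L1 τ) ((a ⊗ₜ b) ⊗ₜ c) = G (LinearMap.lTensor H comul (comul a)) := by
    calc (L1 τ ∘ₗ L2 σ ∘ₗ L1 τ) ((a ⊗ₜ b) ⊗ₜ c)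
        = ∑ i ∈ (ℛ K a).index, τ (((ℛ K a).right i * b) ⊗ₜ c) ⊗ₜ (ℛ K a).left i := by
          simp only [LinearMap.comp_apply, L1, LinearMap.rTensor_tmul, τ_eq_fusion,
            fusion_tmul _ (ℛ K a), sum_tmul, map_sum, LinearMap.mul'_apply]
          rfl
      _ = G (LinearMap.lTensor H comul (comul a)) := by
          rw [← (ℛ K a).eq]
          simp [G, Ψ, τ_tmul, Bialgebra.comul_mul, mul_assoc]
  have rhs : (L2 τ ∘ₗ L1 τ ∘ₗ L2 τ) ((a ⊗ₜ b) ⊗ₜ c) =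
      G (TensorProduct.assoc K H H H (LinearMap.rTensor H comul (comul a))) := by
    simp only [LinearMap.comp_apply, L1, L2, LinearEquiv.coe_coe, assoc_tmul, assoc_symm_tmul,
      LinearMap.lTensor_tmul, LinearMap.rTensor_tmul, τ_eq_fusion, fusion_tmul _ (ℛ K b),
      fusion_tmul _ (ℛ K a), tmul_sum, sum_tmul, map_sum, LinearMap.mul'_apply]
    rw [← (ℛ K a).eq, Finset.sum_comm]
    simp only [map_sum, LinearMap.rTensor_tmul]
    refine Finset.sum_congr rfl fun i _ => ?_
    simp only [fusion_tmul _ (ℛ K ((ℛ K a).left i))]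
    rw [← (ℛ K ((ℛ K a).left i)).eq]
    simp only [G, Ψ, LinearMap.comp_apply]
    rw [← (ℛ K b).eq]
    simp only [LinearMap.mul'_apply, tmul_sum, map_sum, assoc_symm_tmul, LinearMap.mulRight_mul,
      sum_tmul, assoc_tmul, LinearEquiv.coe_coe, comm_tmul, LinearMap.rTensor_tmul,
      LinearMap.coe_comp, Function.comp_apply, LinearMap.mulRight_apply, Finset.mul_sum,
      Algebra.TensorProduct.tmul_mul_tmul, mul_one, mul_assoc]
    exact Finset.sum_comm
  rw [lhs, rhs, coassoc_apply]

end Tau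

section RpTau

variable {K H : Type*} [Field K] [Ring H] [HopfAlgebra K H]

noncomputable def dualAct : H ⊗[K] Module.Dual K H →ₗ[K] Module.Dual K H :=
  TensorProduct.lift (Module.Dual.transpose ∘ₗ LinearMap.mul K H)

lemma dualAct_tmul_apply (h : H) (g : Module.Dual K H) (x : H) :
    dualAct (h ⊗ₜ g) x = g (h * x) := rfl

lemma sum_right_mul_antipode_symm_left (hS : Function.Bijective (antipode K (A := H))) (a : H) :
    ∑ i ∈ (ℛ K a).index,
        (ℛ K a).right i * (LinearEquiv.ofBijective (antipode K) hS).symm ((ℛ K a).left i) =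
      counit (R := K) a • 1 := by
  apply hS.injective
  have hSS (x : H) : antipode K ((LinearEquiv.ofBijective (antipode K) hS).symm x) = x :=
    (LinearEquiv.ofBijective (antipode K) hS).apply_symm_apply x
  simp only [map_sum, antipode_mul_antidistrib, hSS, map_smul, antipode_one]
  exact sum_mul_antipode_eq_smul _

lemma dualTensorHom_comm_rp_τ [FiniteDimensional K H] :
    dualTensorHom K H H ∘ₗ (TensorProduct.comm K H (Module.Dual K H)).toLinearMap ∘ₗ
        rp (τ (K := K) (H := H)) =
      dualTensorHom K H H ∘ₗ fusion dualAct ∘ₗ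
        (TensorProduct.comm K (Module.Dual K H) H).toLinearMap := by
  refine TensorProduct.ext' fun g u => LinearMap.ext fun x => ?_
  simp only [LinearMap.comp_apply, LinearEquiv.coe_coe]
  rw [dualTensorHom_comm_rp_tmul, comm_tmul, τ_eq_fusion, fusion_tmul _ (ℛ K u),
    fusion_tmul _ (ℛ K u)]
  simp [dualAct_tmul_apply]

lemma fusion_dualAct_comp_comm_bijective [FiniteDimensional K H]
    (hS : Function.Bijective (antipode K (A := H))) :
    Function.Bijective (fusion (dualAct (K := K) (H := H)) ∘ₗ
      (TensorProduct.comm K (Module.Dual K H) H).toLinearMap) := by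
  have hinv : fusionInv (LinearEquiv.ofBijective (antipode K) hS).symm.toLinearMap dualAct ∘ₗ
      fusion (dualAct (K := K) (H := H)) = LinearMap.id := by
    refine fusionInv_comp_fusion _ _ fun h g => LinearMap.ext fun x => ?_
    rw [← (ℛ K h).eq]
    simp only [sum_tmul, map_sum, assoc_tmul, map_tmul, LinearEquiv.coe_coe, LinearMap.coe_sum,
      Finset.sum_apply, dualAct_tmul_apply, LinearMap.smul_apply, smul_eq_mul]
    simp_rw [← mul_assoc, ← map_sum, ← Finset.sum_mul, sum_right_mul_antipode_symm_left]
    simp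
  have hinj : Function.Injective (fusion (dualAct (K := K) (H := H)) ∘ₗ
      (TensorProduct.comm K (Module.Dual K H) H).toLinearMap) :=
    (Function.LeftInverse.injective (g := fusionInv _ dualAct) (LinearMap.congr_fun hinv)).comp
      (TensorProduct.comm K (Module.Dual K H) H).injective
  exact ⟨hinj,
    (LinearMap.injective_iff_surjective (K := K) (V := Module.Dual K H ⊗[K] H)).mp hinj⟩

lemma rp_τ_bijective [FiniteDimensional K H] (hS : Function.Bijective (antipode K (A := H))) :
    Function.Bijective (rp (τ (K := K) (H := H))) := by
  rw [rp_bijective_iff, dualTensorHom_comm_rp_τ]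
  exact dualTensorHom_bijective.comp (fusion_dualAct_comp_comm_bijective hS)

end RpTau

section RpTauInv

variable {K H : Type*} [Field K] [Ring H] [HopfAlgebra K H]

lemma dualTensorHom_comm_rp_τinv [FiniteDimensional K H] :
    dualTensorHom K H H ∘ₗ (TensorProduct.comm K H (Module.Dual K H)).toLinearMap ∘ₗ
        rp (τinv (K := K) (H := H)) =
      twist (antipode K) ∘ₗ dualTensorHom K H H := by
  refine TensorProduct.ext' fun g u => LinearMap.ext fun x => ?_
  simp only [LinearMap.comp_apply, LinearEquiv.coe_coe]
  rw [dualTensorHom_comm_rp_tmul, τinv, fusionInv_tmul _ _ _ (ℛ K x), twist_apply,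
    ← (ℛ K x).eq]
  simp

lemma twist_antipode_bijective :
    Function.Bijective (twist (antipode K (A := H))) := by
  have h₁ : twist (antipode K ∘ₗ antipode K) ∘ₗ twist (antipode K (A := H)) = LinearMap.id := by
    refine twist_comp_twist _ _ fun y => ?_
    rw [← (ℛ K y).eq]
    simp only [map_sum, comm_tmul, map_tmul, LinearMap.mul'_apply, LinearMap.comp_apply,
      ← antipode_mul_antidistrib]
    rw [← map_sum, sum_mul_antipode_eq_smul, map_smul, antipode_one]
  have h₂ : twist (antipode K (A := H)) ∘ₗ twist (antipode K ∘ₗ antipode K) = LinearMap.id := by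
    refine twist_comp_twist _ _ fun y => ?_
    rw [← (ℛ K y).eq]
    simp only [map_sum, comm_tmul, map_tmul, LinearMap.mul'_apply, LinearMap.comp_apply,
      ← antipode_mul_antidistrib]
    rw [← map_sum, sum_antipode_mul_eq_smul, map_smul, antipode_one]
  exact Function.bijective_iff_has_inverse.mpr
    ⟨_, fun ψ => LinearMap.congr_fun h₁ ψ, fun ψ => LinearMap.congr_fun h₂ ψ⟩

lemma rp_τinv_bijective [FiniteDimensional K H] :
    Function.Bijective (rp (τinv (K := K) (H := H))) := by
  rw [rp_bijective_iff, dualTensorHom_comm_rp_τinv]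
  exact twist_antipode_bijective.comp dualTensorHom_bijective

end RpTauInv

variable {K H : Type*} [Field K] [Ring H] [HopfAlgebra K H] [FiniteDimensional K H]

/-- a finite-dimensional Hopf algebra `H` over a field `K` with invertible
antipode gives a rigid T-matrix `(Vect_K, H, σ, τ)`: the naturality and pentagon-type
equations hold, `τ` is invertible, and the partial transposes `r_p(τ^{±1})` (w.r.t. the
canonical duality) are invertible. -/
theorem statement10
    (hγ : Function.Bijective (HopfAlgebra.antipode (R := K) (A := H))) :
    (L1 (τ (K := K) (H := H)) ∘ₗ L2 (σ (K := K)) ∘ₗ L1 (σ (K := K)) =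
        L2 (σ (K := K)) ∘ₗ L1 (σ (K := K)) ∘ₗ L2 (τ (K := K))) ∧
    (L1 (τ (K := K) (H := H)) ∘ₗ L2 (σ (K := K)) ∘ₗ L1 (τ (K := K)) =
        L2 (τ (K := K)) ∘ₗ L1 (τ (K := K)) ∘ₗ L2 (τ (K := K))) ∧
    ∃ τi : H ⊗[K] H →ₗ[K] H ⊗[K] H,
      τ (K := K) (H := H) ∘ₗ τi = LinearMap.id ∧
      τi ∘ₗ τ (K := K) (H := H) = LinearMap.id ∧
      Function.Bijective (rp (K := K) (τ (K := K) (H := H))) ∧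
      Function.Bijective (rp (K := K) τi) :=
  ⟨L1_comp_L2_σ_comp_L1_σ τ, L1_τ_comp_L2_σ_comp_L1_τ, τinv, τ_comp_τinv, τinv_comp_τ,
    rp_τ_bijective hγ, rp_τinv_bijective⟩

end Stmt10
end
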